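/- Let R be a commutative ℤ-algebra which verifies the star assumption. Then the polynomial ring R[X] and the formal power series ring R[[X]] also verify the star assumption. -/

import Mathlib

/-! An additive map commutes with multiplication by an integer `n`, so if `n` divides `f` it divides
every coefficient of `f`. The coefficients of an element of `⋂_{p ∈ S} pA` therefore lie in
`⋂_{p ∈ S} pR = 0`, and an element with vanishing coefficients is zero. -/

/-- A commutative `ℤ`-algebra `R` verifies the *star assumption* if, for every infinite set `S`
of prime integers, the intersection `⋂_{p ∈ S} pR` is the zero ideal. -/
def StarAssumption (R : Type*) [CommRing R] : Prop :=
  ∀ S : Set ℕ, (∀ p ∈ S, p.Prime) → S.Infinite → (⨅ p ∈ S, Ideal.span {(p : R)}) = ⊥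

theorem starAssumption_iff {R : Type*} [CommRing R] :
    StarAssumption R ↔ ∀ S : Set ℕ, (∀ p ∈ S, p.Prime) → S.Infinite →
      ∀ x : R, (∀ p ∈ S, (p : R) ∣ x) → x = 0 := by
  simp only [StarAssumption, eq_bot_iff, SetLike.le_def, Ideal.mem_iInf,
    Ideal.mem_span_singleton, Ideal.mem_bot]

theorem StarAssumption.of_addMonoidHom {R A ι : Type*} [CommRing R] [CommRing A]
    (hR : StarAssumption R) (coeff : ι → A →+ R) (hcoeff : ∀ f, (∀ i, coeff i f = 0) → f = 0) :
    StarAssumption A := by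
  rw [starAssumption_iff] at hR ⊢
  intro S hS hSinf f hf
  refine hcoeff f fun i => hR S hS hSinf _ fun p hp => ?_
  obtain ⟨g, rfl⟩ := hf p hp
  exact ⟨coeff i g, by rw [← nsmul_eq_mul, map_nsmul, nsmul_eq_mul]⟩

theorem StarAssumption.polynomial {R : Type*} [CommRing R] (hR : StarAssumption R) :
    StarAssumption (Polynomial R) :=
  hR.of_addMonoidHom (fun n => (Polynomial.lcoeff R n).toAddMonoidHom)
    fun _ h => Polynomial.ext h

theorem StarAssumption.powerSeries {R : Type*} [CommRing R] (hR : StarAssumption R) :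
    StarAssumption (PowerSeries R) :=
  hR.of_addMonoidHom (fun n => (PowerSeries.coeff n).toAddMonoidHom)
    fun _ h => PowerSeries.ext h

/-- If a commutative `ℤ`-algebra `R` verifies the star assumption, then so do the polynomial
ring `R[X]` and the formal power series ring `R[[X]]`. -/
theorem stmt_11 {R : Type*} [CommRing R] (hstar : StarAssumption R) :
    StarAssumption (Polynomial R) ∧ StarAssumption (PowerSeries R) :=
  ⟨hstar.polynomial, hstar.powerSeries⟩
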